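/- Let F(t) = t log(√(t/(2π))/n) - t/2 - π/8, c = 2πn², and consider z = c + v·e^{iπ/4} for real v with |v| ≤ V where V ≤ c/2. Then Re(iF(z)) = -v²F''(c)/2 + O(|v|³/c²) = -v²/(8πn²) + O(|v|³/c²); in particular, along the direction e^{iπ/4} through the saddle point, |e^{iF(z)}| decays like a Gaussian in v. -/

import Mathlib

open Complex Real

/-!
Put `c = 2πn²` and `z = c(1 + w)` with `w = v e^{iπ/4}/c`, so `‖w‖ ≤ 1/2`. Since
`z/(2π) = n²(1 + w)`, the principal branches give `F(z) = (c/2)(1 + w) log(1 + w) - c(1 + w)/2 - π/8`.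
Writing `(1 + w) log(1 + w) = w + w²/2 + O(‖w‖³)`, the linear terms cancel (`c` is the saddle
point) and `w² = i v²/c²` because `(e^{iπ/4})² = i`, so `Re(iF(z)) = -v²/(4c) - (c/2)·Im O(‖w‖³)`,
and the error is at most `(3/4)|v|³/c²`.
-/

/-- The complex extension of the phase `F(z) = z log(√(z/(2π))/n) - z/2 - π/8`. -/
noncomputable def phaseFC (n : ℕ) (z : ℂ) : ℂ :=
  z * Complex.log ((z / (2 * π)) ^ (1 / 2 : ℂ) / n) - z / 2 - π / 8

namespace Complex

lemma log_cpow_one_half (u : ℂ) : log (u ^ (1 / 2 : ℂ)) = log u / 2 := by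
  rcases eq_or_ne u 0 with rfl | hu
  · simp
  have him : (log u * (1 / 2)).im = arg u / 2 := by simp [log_im, div_eq_mul_inv]
  have h₁ := neg_pi_lt_arg u
  have h₂ := arg_le_pi u
  rw [cpow_def_of_ne_zero hu, log_exp (by rw [him]; linarith [pi_pos])
    (by rw [him]; linarith [pi_pos])]
  ring

lemma log_div_ofReal {x : ℂ} (hx : x ≠ 0) {r : ℝ} (hr : 0 < r) :
    log (x / r) = log x - Real.log r := by
  rw [div_eq_inv_mul, ← ofReal_inv, log_ofReal_mul (inv_pos.2 hr) hx, Real.log_inv]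
  push_cast
  ring

lemma exp_I_pi_div_four_sq : exp (I * π / 4) ^ 2 = I := by
  rw [← exp_nat_mul]
  convert exp_pi_div_two_mul_I using 2
  push_cast
  ring

noncomputable def mulLogRemainder (w : ℂ) : ℂ := (1 + w) * log (1 + w) - w - w ^ 2 / 2

lemma norm_mulLogRemainder_le {w : ℂ} (hw : ‖w‖ ≤ 1 / 2) :
    ‖mulLogRemainder w‖ ≤ 3 / 2 * ‖w‖ ^ 3 := by
  have hTaylor : logTaylor 3 w = w - w ^ 2 / 2 := by
    simp only [logTaylor, Finset.sum_range_succ, Finset.sum_range_zero]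
    ring
  set R := log (1 + w) - (w - w ^ 2 / 2) with hR_def
  have hR : ‖R‖ ≤ 2 / 3 * ‖w‖ ^ 3 := by
    have h := norm_log_sub_logTaylor_le 2 (hw.trans_lt (by norm_num))
    rw [hTaylor] at h
    refine h.trans ?_
    have : (1 - ‖w‖)⁻¹ ≤ 2 := by
      rw [inv_le_comm₀ (by linarith) two_pos]
      linarith
    have : ‖w‖ ^ 3 * (1 - ‖w‖)⁻¹ ≤ ‖w‖ ^ 3 * 2 := by gcongr
    push_cast
    linarith
  have hR_mul : mulLogRemainder w = (1 + w) * R - w ^ 3 / 2 := by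
    rw [mulLogRemainder, hR_def]
    ring
  calc ‖mulLogRemainder w‖ ≤ ‖1 + w‖ * ‖R‖ + ‖w‖ ^ 3 / 2 := by
        rw [hR_mul]
        refine (norm_sub_le _ _).trans_eq ?_
        simp [norm_pow]
    _ ≤ (1 + ‖w‖) * (2 / 3 * ‖w‖ ^ 3) + ‖w‖ ^ 3 / 2 := by
        gcongr
        exact (norm_add_le _ _).trans_eq (by rw [norm_one])
    _ ≤ 3 / 2 * ‖w‖ ^ 3 := by
        nlinarith [mul_le_mul_of_nonneg_left hw (pow_nonneg (norm_nonneg w) 3)]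

end Complex

lemma phaseFC_saddle_mul {n : ℕ} (hn : n ≠ 0) {w : ℂ} (hw : 1 + w ≠ 0) :
    phaseFC n ((2 * π * n ^ 2 : ℝ) * (1 + w)) =
      (2 * π * n ^ 2 : ℝ) * ((1 + w) * Complex.log (1 + w) / 2 - (1 + w) / 2) - π / 8 := by
  have hn' : (0 : ℝ) < n := by positivity
  have hquot : ((2 * π * n ^ 2 : ℝ) * (1 + w)) / (2 * π) = ((n ^ 2 : ℝ) : ℂ) * (1 + w) := by
    push_cast
    field_simp [pi_ne_zero]
  have hsqrt_ne : (((n ^ 2 : ℝ) : ℂ) * (1 + w)) ^ (1 / 2 : ℂ) ≠ 0 := by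
    simp [cpow_eq_zero_iff, hn, hw]
  have hlog : Complex.log ((((n ^ 2 : ℝ) : ℂ) * (1 + w)) ^ (1 / 2 : ℂ) / n) =
      Complex.log (1 + w) / 2 := by
    rw [show (n : ℂ) = ((n : ℝ) : ℂ) from rfl, log_div_ofReal hsqrt_ne hn', log_cpow_one_half,
      log_ofReal_mul (by positivity) hw, Real.log_pow]
    push_cast
    ring
  rw [phaseFC, hquot, hlog]
  ring

lemma re_I_mul_phaseFC_saddle_mul {n : ℕ} (hn : n ≠ 0) {w : ℂ} (hw : 1 + w ≠ 0) :
    (I * phaseFC n ((2 * π * n ^ 2 : ℝ) * (1 + w))).re =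
      -(2 * π * n ^ 2) / 2 * (mulLogRemainder w).im - 2 * π * n ^ 2 / 4 * (w ^ 2).im := by
  set c : ℝ := 2 * π * n ^ 2
  have hphase : phaseFC n (c * (1 + w)) =
      c * (mulLogRemainder w / 2 + w ^ 2 / 4) - ((c / 2 + π / 8 : ℝ) : ℂ) := by
    rw [phaseFC_saddle_mul hn hw, mulLogRemainder]
    simp only [c]
    push_cast
    ring
  rw [hphase, I_mul_re, sub_im, im_ofReal_mul, ofReal_im, sub_zero, add_im, div_ofNat_im,
    div_ofNat_im]
  ring

/-- Steepest descent: along the direction `e^{iπ/4}` through the saddle point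
`c = 2πn²`, `Re(iF(c + ve^{iπ/4})) = -v²/(8πn²) + O(|v|³/c²)`. -/
theorem steepest_descent_expansion :
    ∃ C : ℝ, 0 < C ∧ ∀ n : ℕ, 1 ≤ n → ∀ v : ℝ,
      |v| ≤ 2 * π * n ^ 2 / 2 →
      |(Complex.I * phaseFC n ((2 * π * n ^ 2 : ℝ) + v * Complex.exp (Complex.I * π / 4))).re +
          v ^ 2 / (8 * π * n ^ 2)| ≤
        C * |v| ^ 3 / (2 * π * n ^ 2) ^ 2 := by
  refine ⟨3 / 4, by norm_num, fun n hn v hv => ?_⟩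
  set c : ℝ := 2 * π * n ^ 2
  have hc : 0 < c := by positivity
  set w : ℂ := v * exp (I * π / 4) / c
  have hz : (c : ℂ) + v * exp (I * π / 4) = c * (1 + w) := by
    rw [mul_add, mul_one, mul_div_cancel₀ _ (ofReal_ne_zero.2 hc.ne')]
  have hw_norm : ‖w‖ = |v| / c := by
    simp [w, norm_exp, abs_of_pos hc]
  have hw_half : ‖w‖ ≤ 1 / 2 := by
    rw [hw_norm, div_le_iff₀ hc]
    linarith
  have hw_ne : 1 + w ≠ 0 := by
    intro h
    have : ‖w‖ = 1 := by rw [eq_neg_of_add_eq_zero_right h, norm_neg, norm_one]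
    linarith
  have hw_sq : (w ^ 2).im = v ^ 2 / c ^ 2 := by
    rw [div_pow, mul_pow, exp_I_pi_div_four_sq, ← ofReal_pow, ← ofReal_pow, div_ofReal_im,
      im_ofReal_mul, I_im, mul_one]
  rw [hz, re_I_mul_phaseFC_saddle_mul (by omega) hw_ne, hw_sq, show 8 * π * n ^ 2 = 4 * c by ring]
  calc _ = c / 2 * |(mulLogRemainder w).im| := by
        rw [← abs_of_pos (half_pos hc), ← abs_mul, ← abs_neg]
        congr 1
        field_simp
        ring
    _ ≤ c / 2 * (3 / 2 * ‖w‖ ^ 3) := by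
        gcongr
        exact (abs_im_le_norm _).trans (norm_mulLogRemainder_le hw_half)
    _ = 3 / 4 * |v| ^ 3 / c ^ 2 := by
        rw [hw_norm]
        field_simp
        ring
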